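/- The Tribonacci word t is 2-balanced: for all factors U and V of t of equal length and every letter a ∈ {0,1,2}, one has ||U|_a − |V|_a| ≤ 2. -/

import Mathlib

/-- The factor of the infinite word `ω` of length `n` starting at position `i`. -/
def factor {A : Type*} (ω : ℕ → A) (i n : ℕ) : List A :=
  (List.range n).map fun j => ω (i + j)

/-- `ω` is `C`-balanced: for every letter `a` and all factors of equal length,
the numbers of occurrences of `a` differ by at most `C`. -/
def IsCBalanced {A : Type*} [DecidableEq A] (ω : ℕ → A) (C : ℕ) : Prop :=
  ∀ a : A, ∀ n i j : ℕ,
    |((factor ω i n).count a : ℤ) - ((factor ω j n).count a : ℤ)| ≤ (C : ℤ)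

/-- The Tribonacci morphism `τ(0) = 01`, `τ(1) = 02`, `τ(2) = 0`. -/
def tau : Fin 3 → List (Fin 3) := fun a =>
  if a = 0 then [0, 1] else if a = 1 then [0, 2] else [0]

/-- The iterates `τ^k(0)`, which are the prefixes of the Tribonacci word. -/
def tribPrefix : ℕ → List (Fin 3)
  | 0 => [0]
  | k + 1 => ((tribPrefix k).map tau).flatten

/-!
Let `y = 1 / β`, with `β` the Tribonacci constant, so that `y³ + y² + y = 1` and the letter `a` has
frequency `y ^ (a + 1)`. The number of `a`'s in the factor of length `n` at position `i` is
`n y ^ (a + 1) + g (i + n) - g i`, where `g` is the discrepancy of prefixes, so it suffices that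
`g` oscillates by less than `3 / 2`. The prefix lengths `L k` are Tribonacci numbers, and the
greedy decomposition `n = L k₁ + L k₂ + ⋯` gives `g n = ∑ g (L kᵢ)`, so the oscillation of `g` is
at most `∑ |g (L k)|`. The sequence `D k = g (L k)` satisfies the Tribonacci recurrence with no
component along the dominant root, hence the recurrence of the two complex roots, of modulus
`√y < 3 / 4`: a positive definite quadratic form in `(D k, D (k + 1))` shrinks by the factor `y`
at each step, so `|D k| ≤ 7 / 10 * (3 / 4) ^ k`. Twelve exact terms plus this geometric tail stay
below `3 / 2` (about `1.48` for the letter `2`).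
-/

namespace Tribonacci

open Finset

def trib : ℕ → ℕ
  | 0 => 0
  | 1 => 0
  | 2 => 1
  | n + 3 => trib n + trib (n + 1) + trib (n + 2)

lemma trib_add_three (n : ℕ) : trib (n + 3) = trib n + trib (n + 1) + trib (n + 2) := rfl

lemma trib_pos : ∀ n, 0 < trib (n + 2)
  | 0 => by decide
  | 1 => by decide
  | n + 2 => by
    show 0 < trib (n + 4)
    have := trib_pos n
    have h : trib (n + 4) = trib (n + 1) + trib (n + 2) + trib (n + 3) := trib_add_three (n + 1)
    omega

lemma le_trib : ∀ n, n + 1 ≤ trib (n + 3)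
  | 0 => by decide
  | n + 1 => by
    show n + 2 ≤ trib (n + 4)
    have := le_trib n; have := trib_pos n
    have h : trib (n + 4) = trib (n + 1) + trib (n + 2) + trib (n + 3) := trib_add_three (n + 1)
    omega

lemma trib_le_two_mul (n : ℕ) : trib (n + 4) ≤ 2 * trib (n + 3) := by
  have h : trib (n + 4) = trib (n + 1) + trib (n + 2) + trib (n + 3) := trib_add_three (n + 1)
  have := trib_add_three n
  omega

lemma tribPrefix_add_three : ∀ k,
    tribPrefix (k + 3) = tribPrefix (k + 2) ++ tribPrefix (k + 1) ++ tribPrefix k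
  | 0 => by decide
  | k + 1 => by
    show ((tribPrefix (k + 3)).map tau).flatten = ((tribPrefix (k + 2)).map tau).flatten ++
      ((tribPrefix (k + 1)).map tau).flatten ++ ((tribPrefix k).map tau).flatten
    rw [tribPrefix_add_three k]
    simp only [List.map_append, List.flatten_append]

lemma length_tribPrefix : ∀ k, (tribPrefix k).length = trib (k + 3)
  | 0 => rfl
  | 1 => rfl
  | 2 => rfl
  | k + 3 => by
    rw [tribPrefix_add_three, List.length_append, List.length_append, length_tribPrefix k,
      length_tribPrefix (k + 1), length_tribPrefix (k + 2), trib_add_three (k + 3)]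
    ring_nf

lemma count_tribPrefix (a : Fin 3) : ∀ k, (tribPrefix k).count a = trib (k + 2 - a)
  | 0 => by fin_cases a <;> rfl
  | 1 => by fin_cases a <;> rfl
  | 2 => by fin_cases a <;> rfl
  | k + 3 => by
    have ha : (a : ℕ) ≤ 2 := Nat.le_of_lt_succ a.isLt
    rw [tribPrefix_add_three, List.count_append, List.count_append, count_tribPrefix a k,
      count_tribPrefix a (k + 1), count_tribPrefix a (k + 2),
      show k + 3 + 2 - a = k + 2 - a + 3 by omega, trib_add_three,
      show k + 2 - a + 1 = k + 1 + 2 - a by omega, show k + 2 - a + 2 = k + 2 + 2 - a by omega]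
    ring

lemma tribPrefix_succ_append_prefix : ∀ k, tribPrefix (k + 1) ++ tribPrefix k <+: tribPrefix (k + 2)
  | 0 => by decide
  | k + 1 => by rw [tribPrefix_add_three]; exact List.prefix_append _ _

lemma take_tribPrefix_succ : ∀ k m, m < trib (k + 4) - trib (k + 3) →
    (tribPrefix (k + 1)).take (trib (k + 3) + m) = tribPrefix k ++ (tribPrefix k).take m
  | 0, m, hm => by
    obtain rfl : m = 0 := by simpa [trib] using hm
    decide
  | 1, m, hm => by
    have : m < 2 := by simpa [trib] using hm
    interval_cases m <;> decide
  | k + 2, m, hm => by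
    obtain ⟨r, hr⟩ := tribPrefix_succ_append_prefix k
    have hm' : m ≤ (tribPrefix (k + 1) ++ tribPrefix k).length := by
      have h : trib (k + 2 + 4) = trib (k + 3) + trib (k + 1 + 3) + trib (k + 2 + 3) :=
        trib_add_three (k + 3)
      simp only [List.length_append, length_tribPrefix]
      omega
    rw [tribPrefix_add_three, ← length_tribPrefix, List.append_assoc, List.take_length_add_append,
      ← hr, List.take_append_of_le_length hm']

section Words

variable {A : Type*}

lemma length_factor (ω : ℕ → A) (i n : ℕ) : (factor ω i n).length = n := by
  simp [factor]

lemma factor_add (ω : ℕ → A) (i m n : ℕ) :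
    factor ω i (m + n) = factor ω i m ++ factor ω (i + m) n := by
  simp only [factor, List.range_add, List.map_append, List.map_map, Function.comp_def, add_assoc]

lemma take_factor (ω : ℕ → A) (i : ℕ) {n N : ℕ} (h : n ≤ N) :
    (factor ω i N).take n = factor ω i n := by
  obtain ⟨d, rfl⟩ := Nat.exists_eq_add_of_le h
  rw [factor_add, List.take_left' (length_factor ω i n)]

noncomputable def discrepancy [DecidableEq A] (ω : ℕ → A) (a : A) (α : ℝ) (n : ℕ) : ℝ :=
  (factor ω 0 n).count a - n * α

lemma discrepancy_zero [DecidableEq A] (ω : ℕ → A) (a : A) (α : ℝ) : discrepancy ω a α 0 = 0 := by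
  simp [discrepancy, factor]

theorem isCBalanced_of_abs_sub_discrepancy_lt [DecidableEq A] (ω : ℕ → A) (C : ℕ)
    (h : ∀ a, ∃ α : ℝ, ∀ n n', |discrepancy ω a α n - discrepancy ω a α n'| < (C + 1) / 2) :
    IsCBalanced ω C := by
  intro a n i j
  obtain ⟨α, hα⟩ := h a
  have hcount : ∀ s, ((factor ω s n).count a : ℝ) =
      discrepancy ω a α (s + n) - discrepancy ω a α s + n * α := by
    intro s
    rw [discrepancy, discrepancy, factor_add, zero_add, List.count_append]
    push_cast
    ring
  have hlt : |(((factor ω i n).count a - (factor ω j n).count a : ℤ) : ℝ)| < C + 1 := by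
    push_cast
    rw [hcount, hcount]
    calc _ = |(discrepancy ω a α (i + n) - discrepancy ω a α (j + n)) -
          (discrepancy ω a α i - discrepancy ω a α j)| := by congr 1; ring
      _ ≤ _ := abs_sub _ _
      _ < (C + 1) / 2 + (C + 1) / 2 := add_lt_add (hα _ _) (hα _ _)
      _ = C + 1 := by ring
  rw [← Int.cast_abs] at hlt
  exact Int.lt_add_one_iff.mp (by exact_mod_cast hlt)

end Words

section Ostrowski

variable {G : Type*} [AddCommGroup G] [LinearOrder G] [IsOrderedAddMonoid G]
  {L : ℕ → ℕ} {g : ℕ → G}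

theorem mem_Icc_neg_sum_negPart_sum_posPart (hL0 : L 0 = 1) (hL : ∀ k, L (k + 1) ≤ 2 * L k)
    (hg0 : g 0 = 0) (hg : ∀ k m, L k + m < L (k + 1) → g (L k + m) = g (L k) + g m) :
    ∀ K n, n < L K →
      g n ∈ Set.Icc (-∑ k ∈ range K, (g (L k))⁻) (∑ k ∈ range K, (g (L k))⁺)
  | 0, n, hn => by
    obtain rfl : n = 0 := by omega
    simp [hg0]
  | K + 1, n, hn => by
    rw [sum_range_succ, sum_range_succ, neg_add]
    rcases lt_or_ge n (L K) with hnK | hnK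
    · obtain ⟨h₁, h₂⟩ := mem_Icc_neg_sum_negPart_sum_posPart hL0 hL hg0 hg K n hnK
      exact ⟨add_le_of_le_of_nonpos h₁ (neg_nonpos.2 (negPart_nonneg _)),
        le_add_of_le_of_nonneg h₂ (posPart_nonneg _)⟩
    · obtain ⟨m, rfl⟩ := Nat.exists_eq_add_of_le hnK
      have hm : m < L K := by linarith [hL K]
      obtain ⟨h₁, h₂⟩ := mem_Icc_neg_sum_negPart_sum_posPart hL0 hL hg0 hg K m hm
      rw [hg K m hn, add_comm (g (L K))]
      exact ⟨add_le_add h₁ (neg_le.1 (neg_le_negPart _)), add_le_add h₂ (le_posPart _)⟩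

theorem abs_sub_le_sum_abs (hL0 : L 0 = 1) (hL : ∀ k, L (k + 1) ≤ 2 * L k)
    (hg0 : g 0 = 0) (hg : ∀ k m, L k + m < L (k + 1) → g (L k + m) = g (L k) + g m)
    {K n n' : ℕ} (hn : n < L K) (hn' : n' < L K) :
    |g n - g n'| ≤ ∑ k ∈ range K, |g (L k)| := by
  obtain ⟨h₁, h₂⟩ := mem_Icc_neg_sum_negPart_sum_posPart hL0 hL hg0 hg K n hn
  obtain ⟨h₁', h₂'⟩ := mem_Icc_neg_sum_negPart_sum_posPart hL0 hL hg0 hg K n' hn'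
  have hsum : ∑ k ∈ range K, |g (L k)| =
      ∑ k ∈ range K, (g (L k))⁺ + ∑ k ∈ range K, (g (L k))⁻ := by
    rw [← sum_add_distrib]
    exact sum_congr rfl fun k _ => (posPart_add_negPart _).symm
  rw [hsum, abs_sub_le_iff, ← sub_neg_eq_add]
  exact ⟨sub_le_sub h₂ h₁', sub_le_sub h₂' h₁⟩

end Ostrowski

section SecondOrder

variable {p y : ℝ} {u : ℕ → ℝ}

def quadForm (p y u v : ℝ) : ℝ := v ^ 2 + p * u * v + y * u ^ 2

lemma mul_sq_le_quadForm (p y u v : ℝ) : (y - p ^ 2 / 4) * u ^ 2 ≤ quadForm p y u v := by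
  rw [quadForm]
  nlinarith [sq_nonneg (v + p * u / 2)]

lemma quadForm_succ (hu : ∀ k, u (k + 2) = -p * u (k + 1) - y * u k) (k : ℕ) :
    quadForm p y (u (k + 1)) (u (k + 2)) = y * quadForm p y (u k) (u (k + 1)) := by
  simp only [quadForm, hu k]
  ring

lemma quadForm_eq_mul_pow (hu : ∀ k, u (k + 2) = -p * u (k + 1) - y * u k) (k : ℕ) :
    quadForm p y (u k) (u (k + 1)) = quadForm p y (u 0) (u 1) * y ^ k := by
  induction k with
  | zero => simp
  | succ k ih => rw [quadForm_succ hu, ih]; ring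

theorem abs_le_mul_pow_of_quadForm_le {M ρ : ℝ} (hu : ∀ k, u (k + 2) = -p * u (k + 1) - y * u k)
    (hκ : 0 < y - p ^ 2 / 4) (hM : quadForm p y (u 0) (u 1) ≤ (y - p ^ 2 / 4) * M ^ 2)
    (hM0 : 0 ≤ M) (hρ : 0 ≤ ρ) (hyρ : y ≤ ρ ^ 2) (k : ℕ) : |u k| ≤ M * ρ ^ k := by
  have hy : 0 ≤ y := by nlinarith [sq_nonneg p]
  have hsq : (y - p ^ 2 / 4) * u k ^ 2 ≤ (y - p ^ 2 / 4) * (M * ρ ^ k) ^ 2 :=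
    calc (y - p ^ 2 / 4) * u k ^ 2 ≤ quadForm p y (u 0) (u 1) * y ^ k := by
          rw [← quadForm_eq_mul_pow hu]; exact mul_sq_le_quadForm _ _ _ _
      _ ≤ (y - p ^ 2 / 4) * M ^ 2 * (ρ ^ 2) ^ k :=
          mul_le_mul hM (pow_le_pow_left₀ hy hyρ k) (by positivity) (by positivity)
      _ = (y - p ^ 2 / 4) * (M * ρ ^ k) ^ 2 := by ring
  exact abs_le_of_sq_le_sq (le_of_mul_le_mul_left hsq hκ) (by positivity)

lemma sum_range_abs_le_of_abs_le_mul_pow {M ρ : ℝ} (hρ0 : 0 ≤ ρ) (hρ1 : ρ < 1)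
    (hu : ∀ k, |u k| ≤ M * ρ ^ k) (K₀ K : ℕ) :
    ∑ k ∈ range K, |u k| ≤ ∑ k ∈ range K₀, |u k| + M * ρ ^ K₀ / (1 - ρ) := by
  have hM : 0 ≤ M := by simpa using (abs_nonneg _).trans (hu 0)
  rcases le_total K K₀ with hK | hK
  · have := sum_le_sum_of_subset_of_nonneg (range_subset_range.2 hK)
      fun k _ _ => abs_nonneg (u k)
    have : 0 ≤ M * ρ ^ K₀ / (1 - ρ) := by have := sub_pos.2 hρ1; positivity
    linarith
  · rw [← sum_range_add_sum_Ico _ hK]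
    gcongr
    calc ∑ k ∈ Ico K₀ K, |u k| ≤ ∑ k ∈ Ico K₀ K, M * ρ ^ k := sum_le_sum fun k _ => hu k
      _ = M * ∑ k ∈ Ico K₀ K, ρ ^ k := by rw [mul_sum]
      _ ≤ M * (ρ ^ K₀ / (1 - ρ)) := by gcongr; exact geom_sum_Ico_le_of_lt_one hρ0 hρ1
      _ = M * ρ ^ K₀ / (1 - ρ) := by ring

/- `x² + (y² + y) x + y` is the cofactor of `x - 1 / y` in `x³ - x² - x - 1`: a solution of the
Tribonacci recurrence with no component along the dominant root satisfies its recurrence. -/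
theorem second_order_of_tribonacci_recurrence (hy : y ^ 3 + y ^ 2 + y = 1)
    (hu : ∀ k, u (k + 3) = u (k + 2) + u (k + 1) + u k)
    (h0 : u 2 + (y ^ 2 + y) * u 1 + y * u 0 = 0) (k : ℕ) :
    u (k + 2) = -(y ^ 2 + y) * u (k + 1) - y * u k := by
  suffices u (k + 2) + (y ^ 2 + y) * u (k + 1) + y * u k = 0 by linarith
  induction k with
  | zero => exact h0
  | succ k ih =>
    have hy0 : y ≠ 0 := by rintro rfl; norm_num at hy
    refine (mul_eq_zero.1 ?_).resolve_left hy0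
    rw [← ih, show k + 1 + 2 = k + 3 from rfl, hu k]
    linear_combination u (k + 2) * hy

end SecondOrder

section Deviation

variable {y : ℝ}

noncomputable def deviation (y : ℝ) (a : Fin 3) (k : ℕ) : ℝ :=
  trib (k + 2 - a) - trib (k + 3) * y ^ ((a : ℕ) + 1)

lemma deviation_add_three (y : ℝ) (a : Fin 3) (k : ℕ) :
    deviation y a (k + 3) = deviation y a (k + 2) + deviation y a (k + 1) + deviation y a k := by
  have ha : (a : ℕ) ≤ 2 := Nat.le_of_lt_succ a.isLt
  have hc : trib (k + 3 + 2 - a) =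
      trib (k + 2 - a) + trib (k + 1 + 2 - a) + trib (k + 2 + 2 - a) := by
    rw [show k + 3 + 2 - a = k + 2 - a + 3 by omega, trib_add_three,
      show k + 2 - a + 1 = k + 1 + 2 - a by omega, show k + 2 - a + 2 = k + 2 + 2 - a by omega]
  have hl : trib (k + 3 + 3) = trib (k + 3) + trib (k + 1 + 3) + trib (k + 2 + 3) :=
    trib_add_three (k + 3)
  simp only [deviation, hc, hl]
  push_cast
  ring

lemma deviation_initial (hy : y ^ 3 + y ^ 2 + y = 1) (a : Fin 3) :
    deviation y a 2 + (y ^ 2 + y) * deviation y a 1 + y * deviation y a 0 = 0 := by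
  fin_cases a <;> simp [deviation, trib]
  · linear_combination (-2 : ℝ) * hy
  · linear_combination (-2 * y - 1) * hy
  · linear_combination (-2 * y ^ 2 - y - 1) * hy

lemma exists_tribonacci_root :
    ∃ y : ℝ, y ^ 3 + y ^ 2 + y = 1 ∧ 54368901 / 10 ^ 8 ≤ y ∧ y ≤ 54368902 / 10 ^ 8 := by
  obtain ⟨y, ⟨hlo, hhi⟩, hy⟩ := intermediate_value_Icc (a := 54368901 / 10 ^ 8)
    (b := 54368902 / 10 ^ 8) (by norm_num)
    (f := fun x : ℝ => x ^ 3 + x ^ 2 + x) (by fun_prop) (show (1 : ℝ) ∈ Set.Icc _ _ by norm_num)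
  exact ⟨y, hy, hlo, hhi⟩

lemma abs_sub_mul_le_max {c l z lo hi : ℝ} (hl : 0 ≤ l) (hlo : lo ≤ z) (hhi : z ≤ hi) :
    |c - l * z| ≤ max (c - l * lo) (l * hi - c) := by
  rw [abs_le]
  constructor
  · nlinarith [le_max_right (c - l * lo) (l * hi - c)]
  · nlinarith [le_max_left (c - l * lo) (l * hi - c)]

lemma sum_range_twelve_abs_deviation_add_lt (hlo : 54368901 / 10 ^ 8 ≤ y)
    (hhi : y ≤ 54368902 / 10 ^ 8) (a : Fin 3) :
    ∑ k ∈ range 12, |deviation y a k| + 7 / 10 * (3 / 4) ^ 12 / (1 - 3 / 4) < 3 / 2 := by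
  have hbound : ∀ k, |deviation y a k| ≤
      max ((trib (k + 2 - a) : ℝ) - trib (k + 3) * (54368901 / 10 ^ 8) ^ ((a : ℕ) + 1))
        ((trib (k + 3) : ℝ) * (54368902 / 10 ^ 8) ^ ((a : ℕ) + 1) - trib (k + 2 - a)) := fun k =>
    abs_sub_mul_le_max (Nat.cast_nonneg _) (pow_le_pow_left₀ (by norm_num) hlo _)
      (pow_le_pow_left₀ (by linarith) hhi _)
  refine lt_of_le_of_lt (add_le_add_left (sum_le_sum fun k _ => hbound k) _) ?_
  fin_cases a <;> norm_num [sum_range_succ, trib]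

lemma quadForm_deviation_le (hlo : 54368901 / 10 ^ 8 ≤ y) (hhi : y ≤ 54368902 / 10 ^ 8)
    (a : Fin 3) : quadForm (y ^ 2 + y) y (deviation y a 0) (deviation y a 1) ≤
      (y - (y ^ 2 + y) ^ 2 / 4) * (7 / 10) ^ 2 := by
  have h2l : (54368901 / 10 ^ 8 : ℝ) ^ 2 ≤ y ^ 2 := pow_le_pow_left₀ (by norm_num) hlo 2
  have h2u : y ^ 2 ≤ (54368902 / 10 ^ 8 : ℝ) ^ 2 := pow_le_pow_left₀ (by linarith) hhi 2
  have h3u : y ^ 3 ≤ (54368902 / 10 ^ 8 : ℝ) ^ 3 := pow_le_pow_left₀ (by linarith) hhi 3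
  have h3l : 0 ≤ y ^ 3 := by positivity
  fin_cases a <;> simp [quadForm, deviation, trib]
  · nlinarith
  · nlinarith [mul_le_mul h2l hlo (by norm_num) (by positivity),
      mul_le_mul h2u hhi (by linarith) (by positivity)]
  · nlinarith [mul_le_mul h3u h3u h3l (by positivity)]

end Deviation

/- `3 / 4` bounds `√y`, the modulus of the complex roots, and `7 / 10` bounds
`√(quadForm / (y - p ^ 2 / 4))` at `k = 0` for every letter. -/
theorem sum_range_abs_deviation_lt {y : ℝ} (hy : y ^ 3 + y ^ 2 + y = 1)
    (hlo : 54368901 / 10 ^ 8 ≤ y) (hhi : y ≤ 54368902 / 10 ^ 8) (a : Fin 3) (K : ℕ) :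
    ∑ k ∈ range K, |deviation y a k| < 3 / 2 := by
  have hκ : 0 < y - (y ^ 2 + y) ^ 2 / 4 := by nlinarith
  have hdecay := abs_le_mul_pow_of_quadForm_le (ρ := 3 / 4)
    (second_order_of_tribonacci_recurrence hy (deviation_add_three y a) (deviation_initial hy a))
    hκ (quadForm_deviation_le hlo hhi a) (by norm_num) (by norm_num) (by linarith)
  exact (sum_range_abs_le_of_abs_le_mul_pow (by norm_num) (by norm_num) hdecay 12 K).trans_lt
    (sum_range_twelve_abs_deviation_add_lt hlo hhi a)

section TribonacciWord

variable {t : ℕ → Fin 3}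

lemma factor_trib (ht : ∀ k, factor t 0 (tribPrefix k).length = tribPrefix k) (k : ℕ) :
    factor t 0 (trib (k + 3)) = tribPrefix k := by
  rw [← length_tribPrefix]; exact ht k

lemma factor_trib_add (ht : ∀ k, factor t 0 (tribPrefix k).length = tribPrefix k)
    {k m : ℕ} (hm : trib (k + 3) + m < trib (k + 4)) :
    factor t 0 (trib (k + 3) + m) = tribPrefix k ++ factor t 0 m := by
  have hm' : m ≤ trib (k + 3) := by linarith [trib_le_two_mul k]
  calc factor t 0 (trib (k + 3) + m)
      = (factor t 0 (trib (k + 4))).take (trib (k + 3) + m) := (take_factor _ _ hm.le).symm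
    _ = tribPrefix k ++ (tribPrefix k).take m := by
      rw [factor_trib ht (k + 1)]; exact take_tribPrefix_succ k m (by omega)
    _ = tribPrefix k ++ factor t 0 m := by rw [← factor_trib ht k, take_factor _ _ hm']

lemma discrepancy_trib (ht : ∀ k, factor t 0 (tribPrefix k).length = tribPrefix k)
    (y : ℝ) (a : Fin 3) (k : ℕ) :
    discrepancy t a (y ^ ((a : ℕ) + 1)) (trib (k + 3)) = deviation y a k := by
  rw [discrepancy, deviation, factor_trib ht, count_tribPrefix]

lemma discrepancy_trib_add (ht : ∀ k, factor t 0 (tribPrefix k).length = tribPrefix k)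
    (a : Fin 3) (α : ℝ) {k m : ℕ} (hm : trib (k + 3) + m < trib (k + 4)) :
    discrepancy t a α (trib (k + 3) + m) =
      discrepancy t a α (trib (k + 3)) + discrepancy t a α m := by
  simp only [discrepancy, factor_trib_add ht hm, factor_trib ht, List.count_append]
  push_cast
  ring

end TribonacciWord

end Tribonacci

open Tribonacci Finset

/-- The Tribonacci word is `2`-balanced. -/
theorem tribonacci_two_balanced (t : ℕ → Fin 3)
    (ht : ∀ k : ℕ, factor t 0 (tribPrefix k).length = tribPrefix k) :
    IsCBalanced t 2 := by
  obtain ⟨y, hy, hlo, hhi⟩ := exists_tribonacci_root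
  refine isCBalanced_of_abs_sub_discrepancy_lt t 2 fun a => ⟨y ^ ((a : ℕ) + 1), fun n n' => ?_⟩
  have hK : n + n' + 1 ≤ trib (n + n' + 3) := le_trib (n + n')
  calc _ ≤ ∑ k ∈ range (n + n'), |discrepancy t a (y ^ ((a : ℕ) + 1)) (trib (k + 3))| :=
        abs_sub_le_sum_abs (L := fun k => trib (k + 3)) rfl trib_le_two_mul
          (discrepancy_zero t a _) (fun _ _ => discrepancy_trib_add ht a _) (by omega) (by omega)
    _ = ∑ k ∈ range (n + n'), |deviation y a k| := by simp only [discrepancy_trib ht]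
    _ < 3 / 2 := sum_range_abs_deviation_lt hy hlo hhi a _
    _ = ((2 : ℕ) + 1) / 2 := by norm_num
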